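/- (Consistency and No Duplication of Bracha Broadcast.) Under the Bracha Broadcast hypotheses, for all v, v' ∈ Val: if Someone deliverᵥ = T and Someone deliver_{v'} = T, then v = v'. -/
import Mathlib


/-- The three truth values, encoded as `Fin 3` with `0 = F`, `1 = B`, `2 = T`. -/
abbrev TV : Type := Fin 3

/-- false -/ def tF : TV := 0
/-- both/byzantine -/ def tB : TV := 1
/-- true -/ def tT : TV := 2

/-- Negation on `TV`: `neg F = T`, `neg B = B`, `neg T = F`. -/
def tneg (x : TV) : TV := ⟨2 - x.val, by omega⟩

/-- A semitopology: a collection of subsets containing the whole set and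
closed under arbitrary unions. -/
structure Semitopology (P : Type*) where
  opens : Set (Set P)
  univ_mem : Set.univ ∈ opens
  sUnion_mem : ∀ S : Set (Set P), S ⊆ opens → ⋃₀ S ∈ opens

namespace Semitopology

variable {P : Type*}

noncomputable def Everyone (f : P → TV) : TV := ⨅ p, f p

noncomputable def Someone (f : P → TV) : TV := ⨆ p, f p

noncomputable def Quorum (S : Semitopology P) (f : P → TV) : TV :=
  ⨆ O ∈ {O | O ∈ S.opens ∧ O.Nonempty}, ⨅ p ∈ O, f p

noncomputable def Contraquorum (S : Semitopology P) (f : P → TV) : TV :=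
  ⨅ O ∈ {O | O ∈ S.opens ∧ O.Nonempty}, ⨆ p ∈ O, f p

/-- A semitopology is 3-twined when any three nonempty open sets have
nonempty intersection. -/
def ThreeTwined (S : Semitopology P) : Prop :=
  ∀ O₁ O₂ O₃ : Set P, O₁ ∈ S.opens → O₂ ∈ S.opens → O₃ ∈ S.opens →
    O₁.Nonempty → O₂.Nonempty → O₃.Nonempty → (O₁ ∩ O₂ ∩ O₃).Nonempty

end Semitopology

open Semitopology

lemma tv_le_tF (x : TV) (h : ¬ tB ≤ x) : x ≤ tF := by revert h; revert x; decide

lemma tv_le_tB (x : TV) (h : x ≠ tT) : x ≤ tB := by revert h; revert x; decide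

lemma tv_eq_tT (x : TV) (h1 : tB ≤ x) (h2 : x ≠ tB) : x = tT := by
  revert h1 h2; revert x; decide

lemma exists_ge_tB {ι : Sort*} (f : ι → TV) (h : tB ≤ ⨆ i, f i) : ∃ i, tB ≤ f i := by
  by_contra hc
  push_neg at hc
  have h2 : ⨆ i, f i ≤ tF := iSup_le fun i => tv_le_tF _ (not_le_of_gt (hc i))
  exact absurd (h.trans h2) (by decide)

lemma exists_eq_tT {ι : Sort*} (f : ι → TV) (h : ⨆ i, f i = tT) : ∃ i, f i = tT := by
  by_contra hc
  push_neg at hc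
  have h2 : ⨆ i, f i ≤ tB := iSup_le fun i => tv_le_tB _ (hc i)
  rw [h] at h2
  exact absurd h2 (by decide)

lemma quorum_ge {P : Type*} (S : Semitopology P) (f : P → TV) (h : tB ≤ S.Quorum f) :
    ∃ O ∈ S.opens, O.Nonempty ∧ ∀ p ∈ O, tB ≤ f p := by
  unfold Semitopology.Quorum at h
  obtain ⟨O, hO⟩ := exists_ge_tB _ h
  obtain ⟨hmem, hO⟩ := exists_ge_tB _ hO
  exact ⟨O, hmem.1, hmem.2, fun p hp => hO.trans (iInf₂_le p hp)⟩

theorem bracha_consistency {P Val : Type*} [Nonempty Val] (S : Semitopology P)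
    (broadcast echo ready deliver : P → Val → TV)
    (h3t : S.ThreeTwined)
    (hDeliverQ : ∀ p v, deliver p v = tT → tB ≤ S.Quorum (fun q => ready q v))
    (hReadyQ : ∀ p v, ready p v = tT → tB ≤ S.Quorum (fun q => echo q v))
    (hEchoQ : ∀ p v, echo p v = tT → tB ≤ Someone (fun q => broadcast q v))
    (hDeliverB : ∀ p v, S.Quorum (fun q => ready q v) = tT → tB ≤ deliver p v)
    (hReadyB : ∀ p v, S.Quorum (fun q => echo q v) = tT → tB ≤ ready p v)
    (hEchoB : ∀ p v, Someone (fun q => broadcast q v) = tT → tB ≤ ⨆ v'' : Val, echo p v'')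
    (hReadyBB : ∀ p v, S.Contraquorum (fun q => ready q v) = tT → tB ≤ ready p v)
    (hEcho01 : ∀ p (v v' : Val), echo p v = tT → echo p v' = tT → v = v')
    (hBroadcast1a : ∃ v'' : Val, tB ≤ Someone (fun q => broadcast q v''))
    (hBroadcast1b : ∀ v v' : Val, Someone (fun q => broadcast q v) = tT →
        Someone (fun q => broadcast q v') = tT → v = v')
    (hCorrectReady : ∃ O ∈ S.opens, O.Nonempty ∧ ∀ q ∈ O, ∀ v'' : Val, ready q v'' ≠ tB)
    (hCorrectEcho : ∃ O ∈ S.opens, O.Nonempty ∧ ∀ q ∈ O, ∀ v'' : Val, echo q v'' ≠ tB)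
    (hCorrectReady' : ∀ p, (∀ v'' : Val, ready p v'' ≠ tB) ∨ (∀ v'' : Val, ready p v'' = tB))
    (hCorrectEcho' : ∀ p, (∀ v'' : Val, echo p v'' ≠ tB) ∨ (∀ v'' : Val, echo p v'' = tB))
    (hCorrectBroadcast : (∀ (q : P) (v'' : Val), broadcast q v'' ≠ tB) ∨
        (∀ (q : P) (v'' : Val), broadcast q v'' = tB)) :
    ∀ v v' : Val, Someone (fun q => deliver q v) = tT →
      Someone (fun q => deliver q v') = tT → v = v' := by
  intro v v' hv hv'
  obtain ⟨p, hp⟩ := exists_eq_tT _ hv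
  obtain ⟨p', hp'⟩ := exists_eq_tT _ hv'
  obtain ⟨O₁, hO₁o, hO₁ne, hO₁⟩ := quorum_ge S _ (hDeliverQ p v hp)
  obtain ⟨O₂, hO₂o, hO₂ne, hO₂⟩ := quorum_ge S _ (hDeliverQ p' v' hp')
  obtain ⟨O₃, hO₃o, hO₃ne, hO₃⟩ := hCorrectReady
  obtain ⟨q, hq⟩ := h3t O₁ O₂ O₃ hO₁o hO₂o hO₃o hO₁ne hO₂ne hO₃ne
  have hq1 : ready q v = tT := tv_eq_tT _ (hO₁ q hq.1.1) (hO₃ q hq.2 v)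
  have hq2 : ready q v' = tT := tv_eq_tT _ (hO₂ q hq.1.2) (hO₃ q hq.2 v')
  obtain ⟨U₁, hU₁o, hU₁ne, hU₁⟩ := quorum_ge S _ (hReadyQ q v hq1)
  obtain ⟨U₂, hU₂o, hU₂ne, hU₂⟩ := quorum_ge S _ (hReadyQ q v' hq2)
  obtain ⟨U₃, hU₃o, hU₃ne, hU₃⟩ := hCorrectEcho
  obtain ⟨r, hr⟩ := h3t U₁ U₂ U₃ hU₁o hU₂o hU₃o hU₁ne hU₂ne hU₃ne
  have hr1 : echo r v = tT := tv_eq_tT _ (hU₁ r hr.1.1) (hU₃ r hr.2 v)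
  have hr2 : echo r v' = tT := tv_eq_tT _ (hU₂ r hr.1.2) (hU₃ r hr.2 v')
  exact hEcho01 r v v' hr1 hr2
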